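/- Fix 0 < γ1 < 1 and a pursuer position P1 = (x1, y1) ∈ ℝ² with y1 > 0. Then for every evader position E = (x, y) with y > 0, the set {z ∈ ℝ² : dist(z, E) = γ1·dist(z, P1)} meets the x-axis in exactly one point if and only if γ1²x² − (1 − γ1²)y² − 2γ1²x1x + γ1²(x1² + (1 − γ1²)y1²) = 0. In other words, the locus of evader positions in the open upper half-plane for which the E–P1 Apollonius circle is tangent to the goal line is the portion in the open upper half-plane of the hyperbola γ1²x² − (1 − γ1²)y² − 2γ1²x1x + γ1²(x1² + (1 − γ1²)y1²) = 0. -/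

import Mathlib

/-!
A point of the goal line is `(t, 0)`, and after squaring the Apollonius condition for it is a
quadratic equation in `t` with leading coefficient `1 - γ1² > 0`. The circle therefore meets the
line in exactly one point iff that discriminant vanishes, and the discriminant is four times the
left-hand side of the hyperbola's equation.
-/

noncomputable section

/-- The point `(x, y)` in the Euclidean plane `ℝ²`. -/
def pt (x y : ℝ) : EuclideanSpace ℝ (Fin 2) := (WithLp.equiv 2 (Fin 2 → ℝ)).symm ![x, y]

@[simp] lemma pt_apply_zero (x y : ℝ) : pt x y 0 = x := rfl

@[simp] lemma pt_apply_one (x y : ℝ) : pt x y 1 = y := rfl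

lemma pt_apply_zero_apply_one (z : EuclideanSpace ℝ (Fin 2)) : pt (z 0) (z 1) = z := by
  ext i
  fin_cases i <;> rfl

lemma dist_pt_sq (a b c d : ℝ) : dist (pt a b) (pt c d) ^ 2 = (a - c) ^ 2 + (b - d) ^ 2 := by
  rw [EuclideanSpace.dist_eq, Real.sq_sqrt (by positivity), Fin.sum_univ_two]
  simp [Real.dist_eq, sq_abs]

lemma existsUnique_and_apply_one_eq_zero_iff (p : EuclideanSpace ℝ (Fin 2) → Prop) :
    (∃! z, p z ∧ z 1 = 0) ↔ ∃! t : ℝ, p (pt t 0) := by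
  have on_xAxis {z : EuclideanSpace ℝ (Fin 2)} (hz : z 1 = 0) : pt (z 0) 0 = z := by
    rw [← hz, pt_apply_zero_apply_one]
  constructor
  · rintro ⟨z, ⟨hz, hz1⟩, huniq⟩
    refine ⟨z 0, (on_xAxis hz1).symm ▸ hz, fun t ht => ?_⟩
    simpa using congrArg (· 0) (huniq (pt t 0) ⟨ht, rfl⟩)
  · rintro ⟨t, ht, huniq⟩
    refine ⟨pt t 0, ⟨ht, rfl⟩, fun z ⟨hz, hz1⟩ => ?_⟩
    rw [← on_xAxis hz1, huniq (z 0) ((on_xAxis hz1).symm ▸ hz)]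

lemma dist_eq_mul_dist_iff_sq {α : Type*} [PseudoMetricSpace α] {γ : ℝ} (hγ : 0 ≤ γ)
    (z a b : α) : dist z a = γ * dist z b ↔ dist z a ^ 2 = γ ^ 2 * dist z b ^ 2 := by
  rw [← mul_pow, sq_eq_sq₀ dist_nonneg (by positivity)]

lemma dist_pt_eq_mul_dist_pt_iff {γ : ℝ} (hγ : 0 ≤ γ) (t x y x1 y1 : ℝ) :
    dist (pt t 0) (pt x y) = γ * dist (pt t 0) (pt x1 y1) ↔
      (1 - γ ^ 2) * (t * t) + -2 * (x - γ ^ 2 * x1) * t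
        + (x ^ 2 + y ^ 2 - γ ^ 2 * (x1 ^ 2 + y1 ^ 2)) = 0 := by
  rw [dist_eq_mul_dist_iff_sq hγ, dist_pt_sq, dist_pt_sq]
  constructor <;> intro h <;> linear_combination h

theorem tangency_locus_is_hyperbola_general (γ1 x1 y1 : ℝ)
    (h0 : 0 < γ1) (h1 : γ1 < 1) :
    ∀ x y : ℝ, 0 < y →
      ((∃! z : EuclideanSpace ℝ (Fin 2),
          dist z (pt x y) = γ1 * dist z (pt x1 y1) ∧ z 1 = 0) ↔
        γ1 ^ 2 * x ^ 2 - (1 - γ1 ^ 2) * y ^ 2 - 2 * γ1 ^ 2 * x1 * x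
          + γ1 ^ 2 * (x1 ^ 2 + (1 - γ1 ^ 2) * y1 ^ 2) = 0) := by
  intro x y _
  have hlead : 1 - γ1 ^ 2 ≠ 0 := by nlinarith
  simp_rw [existsUnique_and_apply_one_eq_zero_iff, dist_pt_eq_mul_dist_pt_iff h0.le,
    ← discrim_eq_zero_iff hlead, discrim]
  constructor <;> intro h
  · linear_combination h / 4
  · linear_combination 4 * h

/-- For fixed `0 < γ1 < 1` and pursuer position `P1 = (x1, y1)` with `y1 > 0`, the locus
of evader positions `(x, y)` in the open upper half-plane for which the `E–P1` Apollonius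
circle is tangent to the x-axis (meets it in exactly one point) is the portion in the open
upper half-plane of the hyperbola
`γ1²x² − (1 − γ1²)y² − 2γ1²x1x + γ1²(x1² + (1 − γ1²)y1²) = 0`. -/
theorem tangency_locus_is_hyperbola (γ1 x1 y1 : ℝ)
    (h0 : 0 < γ1) (h1 : γ1 < 1) (hy1 : 0 < y1) :
    ∀ x y : ℝ, 0 < y →
      ((∃! z : EuclideanSpace ℝ (Fin 2),
          dist z (pt x y) = γ1 * dist z (pt x1 y1) ∧ z 1 = 0) ↔
        γ1 ^ 2 * x ^ 2 - (1 - γ1 ^ 2) * y ^ 2 - 2 * γ1 ^ 2 * x1 * x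
          + γ1 ^ 2 * (x1 ^ 2 + (1 - γ1 ^ 2) * y1 ^ 2) = 0) :=
  tangency_locus_is_hyperbola_general γ1 x1 y1 h0 h1
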